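/- Let P be a smooth manifold (finite-dimensional, Hausdorff, paracompact), let A be a local algebra with residue homomorphism 0_A : A → ℝ, let p ∈ P, and let u : C^∞(P) → A be an identity-preserving ℝ-algebra homomorphism such that 0_A ∘ u = ev_p. Then for any two smooth functions f, g : P → ℝ that agree on some neighbourhood of p, one has u(f) = u(g); i.e., u(f) depends only on the germ of f at p. -/

import Mathlib

/-!
If `f = g` near `p`, a bump function `φ` at `p` satisfies `φ * (f - g) = 0`, so
`u φ * (u f - u g) = 0`; and `ρ (u φ) = φ p = 1`, which makes `u φ` a unit of the local ring `A`.
-/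

open scoped Manifold Topology ContDiff

/-- An algebra homomorphism onto the base field is surjective, hence local. -/
theorem IsLocalRing.isUnit_of_algHom_apply_ne_zero {K A : Type*} [Field K] [CommRing A]
    [Algebra K A] [IsLocalRing A] (ρ : A →ₐ[K] K) {a : A} (ha : ρ a ≠ 0) : IsUnit a :=
  have : IsLocalHom ρ.toRingHom :=
    .of_surjective _ fun k => ⟨algebraMap K A k, ρ.commutes k⟩
  isUnit_of_map_unit ρ.toRingHom a (isUnit_iff_ne_zero.mpr ha)

section BumpFunction

variable {E : Type*} [NormedAddCommGroup E] [NormedSpace ℝ E] [FiniteDimensional ℝ E]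
  {H : Type*} [TopologicalSpace H] {I : ModelWithCorners ℝ E H}
  {M : Type*} [TopologicalSpace M] [ChartedSpace H M] [IsManifold I ∞ M] [T2Space M]

/-- The witness is a bump function at `p` supported where `f` vanishes. -/
theorem ContMDiffMap.exists_apply_eq_one_mul_eq_zero {p : M} {f : C^∞⟮I, M; 𝓘(ℝ, ℝ), ℝ⟯}
    (hf : ⇑f =ᶠ[𝓝 p] 0) : ∃ φ : C^∞⟮I, M; 𝓘(ℝ, ℝ), ℝ⟯, φ p = 1 ∧ φ * f = 0 := by
  obtain ⟨φ, -, hφf⟩ := (SmoothBumpFunction.nhds_basis_tsupport (I := I) p).mem_iff.mp hf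
  refine ⟨⟨φ, φ.contMDiff⟩, φ.eq_one, ?_⟩
  ext x
  change φ x * f x = 0
  by_cases hx : x ∈ tsupport φ
  · rw [show f x = 0 from hφf hx, mul_zero]
  · rw [image_eq_zero_of_notMem_tsupport hx, zero_mul]

end BumpFunction

theorem pointProche_depends_only_on_germ_general
    (E : Type) [NormedAddCommGroup E] [NormedSpace ℝ E] [FiniteDimensional ℝ E]
    (H : Type) [TopologicalSpace H] (I : ModelWithCorners ℝ E H)
    (P : Type) [TopologicalSpace P] [ChartedSpace H P] [IsManifold I (⊤ : ℕ∞) P]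
    [T2Space P]
    (A : Type) [CommRing A] [Algebra ℝ A] [IsLocalRing A]
    (ρ : A →ₐ[ℝ] ℝ)
    (p : P)
    (u : ContMDiffMap I 𝓘(ℝ, ℝ) P ℝ (⊤ : ℕ∞) →ₐ[ℝ] A)
    (hu : ∀ f : ContMDiffMap I 𝓘(ℝ, ℝ) P ℝ (⊤ : ℕ∞), ρ (u f) = f p) :
    ∀ f g : ContMDiffMap I 𝓘(ℝ, ℝ) P ℝ (⊤ : ℕ∞), (∀ᶠ x in nhds p, f x = g x) → u f = u g := by
  intro f g hfg
  obtain ⟨φ, hφp, hφ⟩ := ContMDiffMap.exists_apply_eq_one_mul_eq_zero (f := f - g)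
    (hfg.mono fun x hx => sub_eq_zero.mpr hx)
  have hunit : IsUnit (u φ) :=
    IsLocalRing.isUnit_of_algHom_apply_ne_zero ρ (by rw [hu, hφp]; exact one_ne_zero)
  rw [← sub_eq_zero, ← map_sub, ← hunit.mul_right_eq_zero, ← map_mul, hφ, map_zero]

/-- Let `P` be a smooth manifold (finite-dimensional, Hausdorff,
paracompact), let `A` be a local algebra with residue homomorphism `0_A : A → ℝ`, let `p ∈ P`,
and let `u : C^∞(P) → A` be an identity-preserving `ℝ`-algebra homomorphism such that
`0_A ∘ u = ev_p`.  Then for any two smooth functions `f, g : P → ℝ` agreeing on some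
neighbourhood of `p`, one has `u(f) = u(g)`; i.e. `u(f)` depends only on the germ of `f`
at `p`. -/
theorem pointProche_depends_only_on_germ
    (E : Type) [NormedAddCommGroup E] [NormedSpace ℝ E] [FiniteDimensional ℝ E]
    (H : Type) [TopologicalSpace H] (I : ModelWithCorners ℝ E H)
    (P : Type) [TopologicalSpace P] [ChartedSpace H P] [IsManifold I (⊤ : ℕ∞) P]
    [T2Space P] [ParacompactSpace P]
    (A : Type) [CommRing A] [Algebra ℝ A] [FiniteDimensional ℝ A] [IsLocalRing A]
    (hres : Nonempty (IsLocalRing.ResidueField A ≃ₐ[ℝ] ℝ))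
    (ρ : A →ₐ[ℝ] ℝ)
    (p : P)
    (u : ContMDiffMap I 𝓘(ℝ, ℝ) P ℝ (⊤ : ℕ∞) →ₐ[ℝ] A)
    (hu : ∀ f : ContMDiffMap I 𝓘(ℝ, ℝ) P ℝ (⊤ : ℕ∞), ρ (u f) = f p) :
    ∀ f g : ContMDiffMap I 𝓘(ℝ, ℝ) P ℝ (⊤ : ℕ∞), (∀ᶠ x in nhds p, f x = g x) → u f = u g :=
  pointProche_depends_only_on_germ_general E H I P A ρ p u hu
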